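/- arXiv:2509.10806 — 4 statements merged into one kernel-verified Lean document; each statement's English description precedes it below -/
import Mathlib

section
/- Let ξ, η, ζ ∈ ℝ² \ {0} with ξ = η + ζ, and let a, b ∈ ℂ² satisfy η·a = 0 and ζ·b = 0 (bilinear, unconjugated dot product). Then a ⊙_ξ b = (i/2)·sign(ξ×η)·(a·e_{η⊥})·(b·e_{ζ⊥})·sin(θ(ξ,η) − θ(ξ,ζ))·e_{ξ⊥}, where ξ⊥ = (−ξ₂, ξ₁), e_{ξ⊥} = ξ⊥/|ξ⊥|, ξ×η = ξ₁η₂ − ξ₂η₁, sign denotes the sign function, and θ(u,v) ∈ [0,π] is the Euclidean angle between nonzero vectors u, v ∈ ℝ². -/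
open MeasureTheory Set

/-- The bilinear (unconjugated) dot product on `ℂ²`. -/
noncomputable def dotC (a b : EuclideanSpace ℂ (Fin 2)) : ℂ := ∑ j, a j * b j

/-- The canonical inclusion of `ℝ²` into `ℂ²`. -/
noncomputable def complexify (ξ : EuclideanSpace ℝ (Fin 2)) : EuclideanSpace ℂ (Fin 2) :=
  (WithLp.equiv 2 (Fin 2 → ℂ)).symm fun j => (ξ j : ℂ)

/-- The rotation of `ξ` by `+90°`: `ξ⊥ = (−ξ₂, ξ₁)`. -/
noncomputable def perp (ξ : EuclideanSpace ℝ (Fin 2)) : EuclideanSpace ℝ (Fin 2) :=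
  (WithLp.equiv 2 (Fin 2 → ℝ)).symm ![-(ξ 1), ξ 0]

/-- The unit vector `e_{ξ⊥} = ξ⊥/|ξ⊥|`. -/
noncomputable def unitPerp (ξ : EuclideanSpace ℝ (Fin 2)) : EuclideanSpace ℝ (Fin 2) :=
  ‖perp ξ‖⁻¹ • perp ξ

/-- The unit vector `e_ξ = ξ/|ξ|`, complexified. -/
noncomputable def eC (ξ : EuclideanSpace ℝ (Fin 2)) : EuclideanSpace ℂ (Fin 2) :=
  complexify (‖ξ‖⁻¹ • ξ)

/-- The projection `π_{ξ⊥} a = a − (e_ξ·a) e_ξ` onto the hyperplane orthogonal to `ξ`. -/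
noncomputable def projPerp (ξ : EuclideanSpace ℝ (Fin 2)) (a : EuclideanSpace ℂ (Fin 2)) :
    EuclideanSpace ℂ (Fin 2) :=
  a - dotC (eC ξ) a • eC ξ

/-- The symmetrized product `a ⊙_ξ b = −(i/2)((e_ξ·b)π_{ξ⊥}a + (e_ξ·a)π_{ξ⊥}b)`. -/
noncomputable def odot (ξ : EuclideanSpace ℝ (Fin 2)) (a b : EuclideanSpace ℂ (Fin 2)) :
    EuclideanSpace ℂ (Fin 2) :=
  (-(Complex.I/2)) • (dotC (eC ξ) b • projPerp ξ a + dotC (eC ξ) a • projPerp ξ b)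

/-- The planar cross product `ξ×η = ξ₁η₂ − ξ₂η₁`. -/
noncomputable def cross (ξ η : EuclideanSpace ℝ (Fin 2)) : ℝ := ξ 0 * η 1 - ξ 1 * η 0
/-!
Since `η·a = 0` and `ζ·b = 0`, we have `a = t η⊥` and `b = s ζ⊥` for some `t, s ∈ ℂ`. In the plane
`π_{ξ⊥} v = (e_{ξ⊥}·v) e_{ξ⊥}`, so `a ⊙_ξ b` is a multiple of `e_{ξ⊥}`; its coefficient follows from
`ξ·η⊥ = −ξ×η`, `ξ⊥·η⊥ = ξ·η` and, because `ξ = η + ζ`, from `ξ×ζ = −ξ×η` and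
`ξ·η − ξ·ζ = |η|² − |ζ|²`. On the other side `sin θ(ξ,η) = |ξ×η|/(|ξ||η|)` and
`cos θ(ξ,η) = ξ·η/(|ξ||η|)`, so the subtraction formula turns `sign(ξ×η) sin(θ(ξ,η) − θ(ξ,ζ))` into
the same rational expression `(ξ×η)(|ζ|² − |η|²)/(|ξ|²|η||ζ|)`.
-/

namespace EuclideanSpace

lemma norm_sq_fin_two (ξ : EuclideanSpace ℝ (Fin 2)) : ‖ξ‖ ^ 2 = ξ 0 ^ 2 + ξ 1 ^ 2 := by
  simp [EuclideanSpace.norm_sq_eq, Fin.sum_univ_two]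

lemma inner_fin_two (ξ η : EuclideanSpace ℝ (Fin 2)) : inner ℝ ξ η = ξ 0 * η 0 + ξ 1 * η 1 := by
  simp [PiLp.inner_apply, Fin.sum_univ_two, mul_comm]

end EuclideanSpace

open EuclideanSpace

@[simp] lemma complexify_apply (ξ : EuclideanSpace ℝ (Fin 2)) (j : Fin 2) :
    complexify ξ j = ξ j := rfl

@[simp] lemma perp_apply_zero (ξ : EuclideanSpace ℝ (Fin 2)) : perp ξ 0 = -ξ 1 := rfl

@[simp] lemma perp_apply_one (ξ : EuclideanSpace ℝ (Fin 2)) : perp ξ 1 = ξ 0 := rfl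

lemma dotC_comm (a b : EuclideanSpace ℂ (Fin 2)) : dotC a b = dotC b a := by
  simp [dotC, mul_comm]

lemma dotC_smul_right (a b : EuclideanSpace ℂ (Fin 2)) (t : ℂ) :
    dotC a (t • b) = t * dotC a b := by
  simp only [dotC, PiLp.smul_apply, smul_eq_mul, Fin.sum_univ_two]; ring

lemma dotC_complexify (ξ η : EuclideanSpace ℝ (Fin 2)) :
    dotC (complexify ξ) (complexify η) = (inner ℝ ξ η : ℝ) := by
  simp [dotC, inner_fin_two, Fin.sum_univ_two]

lemma inner_perp_perp (ξ η : EuclideanSpace ℝ (Fin 2)) :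
    inner ℝ (perp ξ) (perp η) = inner ℝ ξ η := by
  simp only [inner_fin_two, perp_apply_zero, perp_apply_one]; ring

lemma norm_perp (ξ : EuclideanSpace ℝ (Fin 2)) : ‖perp ξ‖ = ‖ξ‖ := by
  rw [← sq_eq_sq₀ (norm_nonneg _) (norm_nonneg _), ← real_inner_self_eq_norm_sq,
    ← real_inner_self_eq_norm_sq, inner_perp_perp]

lemma inner_perp_right (ξ η : EuclideanSpace ℝ (Fin 2)) :
    inner ℝ ξ (perp η) = -cross ξ η := by
  simp only [inner_fin_two, perp_apply_zero, perp_apply_one, cross]; ring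

lemma cross_sq (ξ η : EuclideanSpace ℝ (Fin 2)) :
    cross ξ η ^ 2 = inner ℝ ξ ξ * inner ℝ η η - inner ℝ ξ η * inner ℝ ξ η := by
  simp only [inner_fin_two, cross]; ring

lemma Real.sign_mul_abs (x : ℝ) : Real.sign x * |x| = x := by
  rcases lt_trichotomy x 0 with h | rfl | h
  · rw [Real.sign_of_neg h, abs_of_neg h]; ring
  · simp
  · rw [Real.sign_of_pos h, abs_of_pos h]; ring

lemma cross_eq_neg_cross_of_eq_add {ξ η ζ : EuclideanSpace ℝ (Fin 2)} (hsum : ξ = η + ζ) :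
    cross ξ ζ = -cross ξ η := by
  simp only [cross, hsum, PiLp.add_apply]; ring

lemma inner_sub_inner_of_eq_add {ξ η ζ : EuclideanSpace ℝ (Fin 2)} (hsum : ξ = η + ζ) :
    inner ℝ ξ η - inner ℝ ξ ζ = ‖η‖ ^ 2 - ‖ζ‖ ^ 2 := by
  rw [← inner_sub_right, hsum, inner_add_left, inner_sub_right, inner_sub_right,
    real_inner_comm ζ η, real_inner_self_eq_norm_sq, real_inner_self_eq_norm_sq]
  ring

section Angle

open InnerProductGeometry

lemma sin_angle_eq_abs_cross_div {ξ η : EuclideanSpace ℝ (Fin 2)} (hξ : ξ ≠ 0) (hη : η ≠ 0) :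
    Real.sin (angle ξ η) = |cross ξ η| / (‖ξ‖ * ‖η‖) := by
  rw [eq_div_iff (by positivity), sin_angle_mul_norm_mul_norm, ← cross_sq, Real.sqrt_sq_eq_abs]

lemma sign_cross_mul_sin_angle_sub_angle {ξ η ζ : EuclideanSpace ℝ (Fin 2)}
    (hξ : ξ ≠ 0) (hη : η ≠ 0) (hζ : ζ ≠ 0) (hsum : ξ = η + ζ) :
    Real.sign (cross ξ η) * Real.sin (angle ξ η - angle ξ ζ) * (‖η‖ * ‖ζ‖) =
      cross ξ η * (‖ζ‖ ^ 2 - ‖η‖ ^ 2) / ‖ξ‖ ^ 2 := by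
  rw [Real.sin_sub, sin_angle_eq_abs_cross_div hξ hη, sin_angle_eq_abs_cross_div hξ hζ, cos_angle,
    cos_angle, cross_eq_neg_cross_of_eq_add hsum, abs_neg]
  have := Real.sign_mul_abs (cross ξ η)
  field_simp
  linear_combination (inner ℝ ξ ζ - inner ℝ ξ η) * this - cross ξ η * inner_sub_inner_of_eq_add hsum

end Angle

lemma ofReal_norm_sq_fin_two (ξ : EuclideanSpace ℝ (Fin 2)) :
    ((‖ξ‖ : ℝ) : ℂ) ^ 2 = (ξ 0 : ℂ) ^ 2 + (ξ 1 : ℂ) ^ 2 := by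
  exact_mod_cast norm_sq_fin_two ξ

lemma dotC_complexify_smul_complexify (ξ η : EuclideanSpace ℝ (Fin 2)) (t : ℂ) :
    dotC (complexify ξ) (t • complexify η) = t * (inner ℝ ξ η : ℝ) := by
  rw [dotC_smul_right, dotC_complexify]

lemma dotC_smul_complexify_perp_unitPerp (η : EuclideanSpace ℝ (Fin 2)) (t : ℂ) :
    dotC (t • complexify (perp η)) (complexify (unitPerp η)) = t * (‖η‖ : ℝ) := by
  rw [dotC_comm, dotC_complexify_smul_complexify, unitPerp, real_inner_smul_left,
    real_inner_self_eq_norm_sq, norm_perp, sq, ← mul_assoc, inv_mul_mul_self]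

lemma exists_eq_smul_complexify_perp {η : EuclideanSpace ℝ (Fin 2)} (hη : η ≠ 0)
    {a : EuclideanSpace ℂ (Fin 2)} (ha : dotC (complexify η) a = 0) :
    ∃ t : ℂ, a = t • complexify (perp η) := by
  have hn : ((‖η‖ : ℝ) : ℂ) ≠ 0 := by exact_mod_cast norm_ne_zero_iff.2 hη
  refine ⟨dotC (complexify (perp η)) a / (‖η‖ : ℂ) ^ 2, ?_⟩
  simp only [dotC, Fin.sum_univ_two, complexify_apply] at ha
  ext j
  fin_cases j <;>
    simp only [Fin.zero_eta, Fin.mk_one, dotC, Fin.sum_univ_two, complexify_apply, perp_apply_zero,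
      perp_apply_one, PiLp.smul_apply, smul_eq_mul, Complex.ofReal_neg] <;>
    field_simp
  · linear_combination (η 0 : ℂ) * ha + a 0 * ofReal_norm_sq_fin_two η
  · linear_combination (η 1 : ℂ) * ha + a 1 * ofReal_norm_sq_fin_two η

lemma projPerp_eq {ξ : EuclideanSpace ℝ (Fin 2)} (hξ : ξ ≠ 0) (v : EuclideanSpace ℂ (Fin 2)) :
    projPerp ξ v = dotC (complexify (unitPerp ξ)) v • complexify (unitPerp ξ) := by
  have hn : ((‖ξ‖ : ℝ) : ℂ) ≠ 0 := by exact_mod_cast norm_ne_zero_iff.2 hξ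
  ext j
  fin_cases j <;>
    simp only [Fin.zero_eta, Fin.mk_one, projPerp, eC, unitPerp, norm_perp, dotC, Fin.sum_univ_two,
      complexify_apply, perp_apply_zero, perp_apply_one, PiLp.sub_apply, PiLp.smul_apply, smul_eq_mul,
      Complex.ofReal_mul, Complex.ofReal_inv, Complex.ofReal_neg] <;>
    field_simp
  · linear_combination v 0 * ofReal_norm_sq_fin_two ξ
  · linear_combination v 1 * ofReal_norm_sq_fin_two ξ

lemma odot_eq_smul_unitPerp {ξ : EuclideanSpace ℝ (Fin 2)} (hξ : ξ ≠ 0)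
    (a b : EuclideanSpace ℂ (Fin 2)) :
    odot ξ a b = (-(Complex.I / 2) * (dotC (eC ξ) b * dotC (complexify (unitPerp ξ)) a +
      dotC (eC ξ) a * dotC (complexify (unitPerp ξ)) b)) • complexify (unitPerp ξ) := by
  rw [odot, projPerp_eq hξ, projPerp_eq hξ, smul_smul, smul_smul, ← add_smul, smul_smul]

lemma odot_smul_perp_smul_perp {ξ η ζ : EuclideanSpace ℝ (Fin 2)} (hξ : ξ ≠ 0)
    (hsum : ξ = η + ζ) (t s : ℂ) :
    odot ξ (t • complexify (perp η)) (s • complexify (perp ζ)) =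
      (Complex.I / 2 * t * s * (cross ξ η * (‖ζ‖ ^ 2 - ‖η‖ ^ 2) / ‖ξ‖ ^ 2 : ℝ)) •
        complexify (unitPerp ξ) := by
  rw [odot_eq_smul_unitPerp hξ, eC, unitPerp, norm_perp]
  simp only [dotC_complexify_smul_complexify, real_inner_smul_left]
  rw [inner_perp_perp, inner_perp_perp, inner_perp_right, inner_perp_right,
    cross_eq_neg_cross_of_eq_add hsum]
  congr 1
  have hn : ((‖ξ‖ : ℝ) : ℂ) ≠ 0 := by exact_mod_cast norm_ne_zero_iff.2 hξ
  have hinner : ((inner ℝ ξ η : ℝ) : ℂ) - (inner ℝ ξ ζ : ℝ) = (‖η‖ : ℂ) ^ 2 - (‖ζ‖ : ℂ) ^ 2 := by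
    exact_mod_cast inner_sub_inner_of_eq_add hsum
  push_cast
  field_simp
  linear_combination (-(t * s * cross ξ η)) * hinner

theorem stmt1 (ξ η ζ : EuclideanSpace ℝ (Fin 2))
    (hξ : ξ ≠ 0) (hη : η ≠ 0) (hζ : ζ ≠ 0) (hsum : ξ = η + ζ)
    (a b : EuclideanSpace ℂ (Fin 2))
    (ha : dotC (complexify η) a = 0) (hb : dotC (complexify ζ) b = 0) :
    odot ξ a b =
      ((Complex.I/2) * (Real.sign (cross ξ η) : ℂ)
          * dotC a (complexify (unitPerp η)) * dotC b (complexify (unitPerp ζ))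
          * (Real.sin (InnerProductGeometry.angle ξ η - InnerProductGeometry.angle ξ ζ) : ℂ))
        • complexify (unitPerp ξ) := by
  obtain ⟨t, rfl⟩ := exists_eq_smul_complexify_perp hη ha
  obtain ⟨s, rfl⟩ := exists_eq_smul_complexify_perp hζ hb
  rw [odot_smul_perp_smul_perp hξ hsum, dotC_smul_complexify_perp_unitPerp,
    dotC_smul_complexify_perp_unitPerp]
  congr 1
  have key := congrArg (fun x : ℝ => (x : ℂ)) (sign_cross_mul_sin_angle_sub_angle hξ hη hζ hsum)
  simp only [Complex.ofReal_mul] at key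
  linear_combination (-(Complex.I / 2 * t * s)) * key
end

section
/- For every γ ∈ (1/2, 3/4), the following strict inequality between convergent integrals holds: ∫_0^2 r^{2−2γ} |1−r|^{2γ−2} dr < ∫_0^2 r^{2−4γ} |1−r|^{2γ−2} dr. Equivalently, ∫_{1/2}^∞ r^{−2} |1−r|^{2γ−2} dr < ∫_{1/2}^∞ |r − r²|^{2γ−2} dr. -/
/-!
Write `s = r ^ (1 - 2γ)`. The difference of the two integrands on `(0, 2)` is
`s (s - r) |1 - r| ^ (2γ - 2)`, and the tangent line of the convex function `r ↦ r ^ (1 - 2γ)`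
at `r = 1` gives `s ≥ r + 2γ (1 - r)`. Hence the difference is at least
`2γ r ^ (1 - 2γ) (1 - r) ^ (2γ - 1)` on `(0, 1)` and at least `-2γ (r - 1) ^ (2γ - 1)`
on `(1, 2)`.
The second bound integrates to `-1`. The first integrates to `2γ` times a Beta integral
`∫₀¹ r ^ p (1 - r) ^ (-p)`, which is at least `1`: its integrand and the reflected integrand
`r ↦ (1 - r) ^ p r ^ (-p)` have product `1`, so their sum is at least `2`. The difference of the
integrals is therefore at least `2γ - 1 > 0`. The substitution `r ↦ 1 / r` carries `(0, 2)` onto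
`(1/2, ∞)` and the two integrals on `(0, 2)` onto those on `(1/2, ∞)`.
-/

open MeasureTheory Set

lemma integrableOn_Icc_abs_sub_rpow {q : ℝ} (hq : -1 < q) (c a b : ℝ) :
    IntegrableOn (fun x : ℝ => |x - c| ^ q) (Icc a b) := by
  have hloc : LocallyIntegrable (fun x : ℝ => |x| ^ q) := by
    refine locallyIntegrable_of_norm_le_rpow (μ := volume) (C := 1) (α := -q)
      (by simp only [Module.finrank_self, le_refl])
      (by simp only [Module.finrank_self, Nat.cast_one]; linarith) (ae_of_all _ fun x => ?_)
      (continuous_abs.measurable.pow_const q).aestronglyMeasurable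
    simp [abs_of_nonneg (Real.rpow_nonneg (abs_nonneg x) q)]
  have h := ((hloc.integrableOn_isCompact isCompact_uIcc).intervalIntegrable
    (a := a - c) (b := b - c)).comp_sub_right c
  simp only [sub_add_cancel] at h
  exact ((intervalIntegrable_iff' (by simp)).1 h).mono_set Icc_subset_uIcc

lemma integrableOn_rpow_mul_abs_one_sub_rpow {p q : ℝ} (hp : -1 < p) (hq : -1 < q) (b : ℝ) :
    IntegrableOn (fun r : ℝ => r ^ p * |1 - r| ^ q) (Icc 0 b) := by
  have hleft : IntegrableOn (fun r : ℝ => r ^ p * |1 - r| ^ q) (Icc 0 2⁻¹) := by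
    refine IntegrableOn.mul_continuousOn ?_ ?_ isCompact_Icc
    · refine (integrableOn_Icc_abs_sub_rpow hp 0 0 2⁻¹).congr_fun (fun r hr => ?_)
        measurableSet_Icc
      simp only [sub_zero, abs_of_nonneg hr.1]
    · refine ContinuousOn.rpow_const (by fun_prop) fun r hr => Or.inl ?_
      exact abs_ne_zero.2 (by linarith [hr.2])
  have hright : IntegrableOn (fun r : ℝ => r ^ p * |1 - r| ^ q) (Icc 2⁻¹ b) := by
    refine IntegrableOn.continuousOn_mul ?_ ?_ isCompact_Icc
    · exact ContinuousOn.rpow_const (by fun_prop) fun r hr => Or.inl (by linarith [hr.1])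
    · simpa only [abs_sub_comm] using integrableOn_Icc_abs_sub_rpow hq 1 2⁻¹ b
  refine (hleft.union hright).mono_set fun r hr => ?_
  rcases le_total r 2⁻¹ with h | h
  exacts [Or.inl ⟨hr.1, h⟩, Or.inr ⟨h, hr.2⟩]

lemma integrableOn_rpow_mul_one_sub_rpow {p q : ℝ} (hp : -1 < p) (hq : -1 < q) :
    IntegrableOn (fun r : ℝ => r ^ p * (1 - r) ^ q) (Ioo (0 : ℝ) 1) := by
  refine ((integrableOn_rpow_mul_abs_one_sub_rpow hp hq 1).mono_set Ioo_subset_Icc_self).congr_fun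
    (fun r hr => ?_) measurableSet_Ioo
  simp only [abs_of_pos (sub_pos.2 hr.2)]

lemma one_le_integral_rpow_mul_one_sub_rpow {p q : ℝ} (hp : -1 < p) (hq : -1 < q)
    (hpq : p + q = 0) :
    1 ≤ ∫ r in Ioo (0 : ℝ) 1, r ^ p * (1 - r) ^ q := by
  set f : ℝ → ℝ := fun r => r ^ p * (1 - r) ^ q
  have hf : IntegrableOn f (Ioo 0 1) := integrableOn_rpow_mul_one_sub_rpow hp hq
  have hf' : IntegrableOn (fun r => f (1 - r)) (Ioo 0 1) := by
    simpa only [f, sub_sub_cancel, mul_comm] using integrableOn_rpow_mul_one_sub_rpow hq hp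
  have hreflect : ∫ r in Ioo 0 1, f (1 - r) = ∫ r in Ioo 0 1, f r := by
    simp only [← integral_Ioc_eq_integral_Ioo, ← intervalIntegral.integral_of_le zero_le_one]
    simp
  have hamgm : ∀ r ∈ Ioo (0 : ℝ) 1, 2 ≤ f r + f (1 - r) := by
    intro r ⟨hr0, hr1⟩
    have h1r : 0 < 1 - r := sub_pos.2 hr1
    have hpos : 0 < f r := by positivity
    have hprod : f r * f (1 - r) = 1 := by
      calc f r * f (1 - r) = (r ^ p * r ^ q) * ((1 - r) ^ p * (1 - r) ^ q) := by
            simp only [f, sub_sub_cancel]; ring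
        _ = 1 := by rw [← Real.rpow_add hr0, ← Real.rpow_add h1r, hpq]; simp
    nlinarith [sq_nonneg (f r - 1)]
  have h2 : 2 ≤ ∫ r in Ioo 0 1, (f r + f (1 - r)) := by
    calc (2 : ℝ) = ∫ r in Ioo (0 : ℝ) 1, (2 : ℝ) := by simp
      _ ≤ _ := setIntegral_mono_on (integrableOn_const measure_Ioo_lt_top.ne) (hf.add hf')
          measurableSet_Ioo hamgm
  rw [integral_add hf hf', hreflect] at h2
  linarith

lemma setIntegral_Ioo_add_setIntegral_Ioo {f : ℝ → ℝ} {a b c : ℝ} (hab : a ≤ b)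
    (hbc : b ≤ c) (hf : IntegrableOn f (Ioo a c)) :
    (∫ r in Ioo a b, f r) + ∫ r in Ioo b c, f r = ∫ r in Ioo a c, f r := by
  simp only [← integral_Ioc_eq_integral_Ioo, ← intervalIntegral.integral_of_le hab,
    ← intervalIntegral.integral_of_le hbc, ← intervalIntegral.integral_of_le (hab.trans hbc)]
  exact intervalIntegral.integral_add_adjacent_intervals
    ((intervalIntegrable_iff_integrableOn_Ioo_of_le hab).2 (hf.mono_set (Ioo_subset_Ioo_right hbc)))
    ((intervalIntegrable_iff_integrableOn_Ioo_of_le hbc).2 (hf.mono_set (Ioo_subset_Ioo_left hab)))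

lemma integral_Ioo_one_two_sub_one_rpow {a : ℝ} (ha : 0 < a) :
    ∫ r in Ioo 1 2, (r - 1) ^ (a - 1) = a⁻¹ := by
  rw [← integral_Ioc_eq_integral_Ioo, ← intervalIntegral.integral_of_le one_le_two,
    intervalIntegral.integral_comp_sub_right (fun r : ℝ => r ^ (a - 1)),
    integral_rpow (Or.inl (by linarith))]
  norm_num [Real.zero_rpow ha.ne']

lemma setIntegral_Ioi_inv_eq {b : ℝ} (hb : 0 < b) (F : ℝ → ℝ) :
    ∫ x in Ioi b⁻¹, F x = ∫ x in Ioo 0 b, (x ^ 2)⁻¹ * F x⁻¹ := by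
  have h := integral_image_eq_integral_abs_deriv_smul (measurableSet_Ioo (a := 0) (b := b))
    (fun x hx => (hasDerivAt_inv hx.1.ne').hasDerivWithinAt) inv_injective.injOn F
  rw [image_inv_eq_inv, inv_Ioo_0_left hb] at h
  simpa using h

lemma integrableOn_Ioi_inv_iff {b : ℝ} (hb : 0 < b) (F : ℝ → ℝ) :
    IntegrableOn F (Ioi b⁻¹) ↔ IntegrableOn (fun x => (x ^ 2)⁻¹ * F x⁻¹) (Ioo 0 b) := by
  have h := integrableOn_image_iff_integrableOn_abs_deriv_smul
    (measurableSet_Ioo (a := 0) (b := b))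
    (fun x hx => (hasDerivAt_inv hx.1.ne').hasDerivWithinAt) inv_injective.injOn F
  rw [image_inv_eq_inv, inv_Ioo_0_left hb] at h
  simpa using h

lemma inv_sq_mul_inv_rpow_neg_two_mul_abs_one_sub_inv_rpow {x : ℝ} (hx : 0 < x) (q : ℝ) :
    (x ^ 2)⁻¹ * ((x⁻¹) ^ (-2 : ℝ) * |1 - x⁻¹| ^ q) = x ^ (-q) * |1 - x| ^ q := by
  have habs : |1 - x⁻¹| = |1 - x| * x⁻¹ := by
    rw [show 1 - x⁻¹ = (x - 1) * x⁻¹ by field_simp, abs_mul, abs_of_pos (inv_pos.2 hx),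
      abs_sub_comm]
  rw [habs, Real.mul_rpow (abs_nonneg _) (inv_nonneg.2 hx.le), Real.inv_rpow hx.le,
    Real.inv_rpow hx.le, Real.rpow_neg hx.le, Real.rpow_neg hx.le, inv_inv, Real.rpow_two]
  field_simp

lemma inv_sq_mul_abs_inv_sub_inv_sq_rpow {x : ℝ} (hx : 0 < x) (q : ℝ) :
    (x ^ 2)⁻¹ * |x⁻¹ - (x⁻¹) ^ 2| ^ q = x ^ (-2 * q - 2) * |1 - x| ^ q := by
  have habs : |x⁻¹ - (x⁻¹) ^ 2| = |1 - x| * (x ^ 2)⁻¹ := by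
    rw [show x⁻¹ - (x⁻¹) ^ 2 = (x - 1) * (x ^ 2)⁻¹ by field_simp, abs_mul,
      abs_of_pos (by positivity : 0 < (x ^ 2)⁻¹), abs_sub_comm]
  rw [habs, Real.mul_rpow (abs_nonneg _) (by positivity), Real.inv_rpow (by positivity),
    Real.rpow_sub hx, neg_mul, Real.rpow_neg hx.le, Real.rpow_mul hx.le, Real.rpow_two]
  field_simp

lemma add_mul_one_sub_le_rpow_one_sub {a r : ℝ} (ha : 1 ≤ a) (hr : 0 < r) :
    r + a * (1 - r) ≤ r ^ (1 - a) := by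
  have h := one_add_mul_self_le_rpow_one_add (by linarith [inv_pos.2 hr] : -1 ≤ r⁻¹ - 1) ha
  rw [add_sub_cancel, Real.inv_rpow hr.le, ← Real.rpow_neg hr.le] at h
  calc r + a * (1 - r) = r * (1 + a * (r⁻¹ - 1)) := by field_simp
    _ ≤ r * r ^ (-a) := mul_le_mul_of_nonneg_left h hr.le
    _ = r ^ (1 - a) := by rw [sub_eq_add_neg, Real.rpow_add hr, Real.rpow_one]

lemma rpow_two_sub_four_mul_sub_rpow_two_sub_two_mul {r : ℝ} (hr : 0 < r) (γ : ℝ) :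
    r ^ (2 - 4*γ) - r ^ (2 - 2*γ) = r ^ (1 - 2*γ) * (r ^ (1 - 2*γ) - r) := by
  rw [mul_sub, ← Real.rpow_add hr, ← Real.rpow_add_one hr.ne']
  ring_nf

lemma mul_one_sub_mul_rpow_le_rpow_sub_rpow {γ r : ℝ} (hγ : 1/2 ≤ γ) (hr : 0 < r) :
    2*γ * (1 - r) * r ^ (1 - 2*γ) ≤ r ^ (2 - 4*γ) - r ^ (2 - 2*γ) := by
  have hs := Real.rpow_pos_of_pos hr (1 - 2*γ)
  have := add_mul_one_sub_le_rpow_one_sub (by linarith : 1 ≤ 2*γ) hr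
  rw [rpow_two_sub_four_mul_sub_rpow_two_sub_two_mul hr]
  nlinarith

lemma mul_one_sub_le_rpow_sub_rpow_of_one_le {γ r : ℝ} (hγ : 1/2 ≤ γ) (hr : 1 ≤ r) :
    2*γ * (1 - r) ≤ r ^ (2 - 4*γ) - r ^ (2 - 2*γ) := by
  have hr0 : 0 < r := by linarith
  have hs1 : r ^ (1 - 2*γ) ≤ 1 := Real.rpow_le_one_of_one_le_of_nonpos hr (by linarith)
  have := mul_one_sub_mul_rpow_le_rpow_sub_rpow hγ hr0
  nlinarith [mul_nonneg (by nlinarith : 0 ≤ 2*γ * (r - 1)) (sub_nonneg.2 hs1)]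

lemma integrableOn_rpow_sub_rpow_mul_abs_one_sub_rpow {γ : ℝ} (hγ1 : 1/2 < γ) (hγ2 : γ < 3/4)
    (b : ℝ) :
    IntegrableOn (fun r : ℝ => (r ^ (2 - 4*γ) - r ^ (2 - 2*γ)) * |1 - r| ^ (2*γ - 2))
      (Icc 0 b) := by
  simp only [sub_mul]
  exact (integrableOn_rpow_mul_abs_one_sub_rpow (by linarith) (by linarith) b).sub
    (integrableOn_rpow_mul_abs_one_sub_rpow (by linarith) (by linarith) b)

lemma two_mul_le_integral_Ioo_zero_one_rpow_sub_rpow_mul {γ : ℝ} (hγ1 : 1/2 < γ)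
    (hγ2 : γ < 3/4) :
    2*γ ≤
      ∫ r in Ioo (0 : ℝ) 1, (r ^ (2 - 4*γ) - r ^ (2 - 2*γ)) * |1 - r| ^ (2*γ - 2) := by
  have hbeta : IntegrableOn (fun r : ℝ => r ^ (1 - 2*γ) * (1 - r) ^ (2*γ - 1)) (Ioo 0 1) :=
    integrableOn_rpow_mul_one_sub_rpow (by linarith) (by linarith)
  have hle : ∀ r ∈ Ioo (0 : ℝ) 1, 2*γ * (r ^ (1 - 2*γ) * (1 - r) ^ (2*γ - 1)) ≤
      (r ^ (2 - 4*γ) - r ^ (2 - 2*γ)) * |1 - r| ^ (2*γ - 2) := by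
    intro r ⟨hr0, hr1⟩
    have h1r : 0 < 1 - r := sub_pos.2 hr1
    rw [abs_of_pos h1r, show 2*γ - 1 = 2*γ - 2 + 1 by ring, Real.rpow_add_one h1r.ne']
    calc 2*γ * (r ^ (1 - 2*γ) * ((1 - r) ^ (2*γ - 2) * (1 - r)))
        = 2*γ * (1 - r) * r ^ (1 - 2*γ) * (1 - r) ^ (2*γ - 2) := by ring
      _ ≤ _ := mul_le_mul_of_nonneg_right (mul_one_sub_mul_rpow_le_rpow_sub_rpow hγ1.le hr0)
          (Real.rpow_nonneg h1r.le _)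
  calc 2*γ ≤ 2*γ * ∫ r in Ioo (0 : ℝ) 1, r ^ (1 - 2*γ) * (1 - r) ^ (2*γ - 1) :=
        le_mul_of_one_le_right (by linarith)
          (one_le_integral_rpow_mul_one_sub_rpow (by linarith) (by linarith) (by ring))
    _ = ∫ r in Ioo (0 : ℝ) 1, 2*γ * (r ^ (1 - 2*γ) * (1 - r) ^ (2*γ - 1)) :=
        (integral_const_mul _ _).symm
    _ ≤ _ := setIntegral_mono_on (hbeta.const_mul _)
        ((integrableOn_rpow_sub_rpow_mul_abs_one_sub_rpow hγ1 hγ2 1).mono_set Ioo_subset_Icc_self)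
        measurableSet_Ioo hle

lemma neg_one_le_integral_Ioo_one_two_rpow_sub_rpow_mul {γ : ℝ} (hγ1 : 1/2 < γ)
    (hγ2 : γ < 3/4) :
    -1 ≤ ∫ r in Ioo (1 : ℝ) 2, (r ^ (2 - 4*γ) - r ^ (2 - 2*γ)) * |1 - r| ^ (2*γ - 2) := by
  have hpow : IntegrableOn (fun r : ℝ => (r - 1) ^ (2*γ - 1)) (Ioo 1 2) :=
    ((continuous_id.sub continuous_const).rpow_const fun _ => Or.inr (by linarith)).integrableOn_Icc
      |>.mono_set Ioo_subset_Icc_self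
  have hle : ∀ r ∈ Ioo (1 : ℝ) 2, -(2*γ * (r - 1) ^ (2*γ - 1)) ≤
      (r ^ (2 - 4*γ) - r ^ (2 - 2*γ)) * |1 - r| ^ (2*γ - 2) := by
    intro r ⟨hr1, _⟩
    have hr1' : 0 < r - 1 := sub_pos.2 hr1
    rw [abs_sub_comm, abs_of_pos hr1', show 2*γ - 1 = 2*γ - 2 + 1 by ring,
      Real.rpow_add_one hr1'.ne']
    calc -(2*γ * ((r - 1) ^ (2*γ - 2) * (r - 1)))
        = 2*γ * (1 - r) * (r - 1) ^ (2*γ - 2) := by ring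
      _ ≤ _ := mul_le_mul_of_nonneg_right (mul_one_sub_le_rpow_sub_rpow_of_one_le hγ1.le hr1.le)
          (Real.rpow_nonneg hr1'.le _)
  calc (-1 : ℝ) = -(2*γ * ∫ r in Ioo (1 : ℝ) 2, (r - 1) ^ (2*γ - 1)) := by
        rw [integral_Ioo_one_two_sub_one_rpow (by linarith), mul_inv_cancel₀ (by linarith)]
    _ = ∫ r in Ioo (1 : ℝ) 2, -(2*γ * (r - 1) ^ (2*γ - 1)) := by
        rw [integral_neg, integral_const_mul]
    _ ≤ _ := setIntegral_mono_on (hpow.const_mul _).neg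
        ((integrableOn_rpow_sub_rpow_mul_abs_one_sub_rpow hγ1 hγ2 2).mono_set
          (Ioo_subset_Icc_self.trans (Icc_subset_Icc_left zero_le_one)))
        measurableSet_Ioo hle

lemma integral_rpow_two_sub_two_mul_lt_integral_rpow_two_sub_four_mul {γ : ℝ} (hγ1 : 1/2 < γ)
    (hγ2 : γ < 3/4) :
    ∫ r in Ioo (0 : ℝ) 2, r ^ (2 - 2*γ) * |1 - r| ^ (2*γ - 2) <
      ∫ r in Ioo (0 : ℝ) 2, r ^ (2 - 4*γ) * |1 - r| ^ (2*γ - 2) := by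
  have hgap : ∫ r in Ioo (0 : ℝ) 2, (r ^ (2 - 4*γ) - r ^ (2 - 2*γ)) * |1 - r| ^ (2*γ - 2) =
      (∫ r in Ioo (0 : ℝ) 2, r ^ (2 - 4*γ) * |1 - r| ^ (2*γ - 2)) -
        ∫ r in Ioo (0 : ℝ) 2, r ^ (2 - 2*γ) * |1 - r| ^ (2*γ - 2) := by
    simp only [sub_mul]
    exact integral_sub
      ((integrableOn_rpow_mul_abs_one_sub_rpow (by linarith) (by linarith) 2).mono_set
        Ioo_subset_Icc_self)
      ((integrableOn_rpow_mul_abs_one_sub_rpow (by linarith) (by linarith) 2).mono_set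
        Ioo_subset_Icc_self)
  rw [← sub_pos, ← hgap, ← setIntegral_Ioo_add_setIntegral_Ioo zero_le_one one_le_two
    ((integrableOn_rpow_sub_rpow_mul_abs_one_sub_rpow hγ1 hγ2 2).mono_set Ioo_subset_Icc_self)]
  linarith [two_mul_le_integral_Ioo_zero_one_rpow_sub_rpow_mul hγ1 hγ2,
    neg_one_le_integral_Ioo_one_two_rpow_sub_rpow_mul hγ1 hγ2]

theorem stmt8 (γ : ℝ) (hγ : γ ∈ Set.Ioo (1/2 : ℝ) (3/4 : ℝ)) :
    (IntegrableOn (fun r : ℝ => r ^ (2 - 2*γ) * |1 - r| ^ (2*γ - 2)) (Set.Ioo 0 2) volume ∧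
     IntegrableOn (fun r : ℝ => r ^ (2 - 4*γ) * |1 - r| ^ (2*γ - 2)) (Set.Ioo 0 2) volume ∧
     ∫ r in Set.Ioo (0 : ℝ) 2, r ^ (2 - 2*γ) * |1 - r| ^ (2*γ - 2) <
       ∫ r in Set.Ioo (0 : ℝ) 2, r ^ (2 - 4*γ) * |1 - r| ^ (2*γ - 2)) ∧
    (IntegrableOn (fun r : ℝ => r ^ (-2 : ℝ) * |1 - r| ^ (2*γ - 2)) (Set.Ioi (1/2)) volume ∧
     IntegrableOn (fun r : ℝ => |r - r^2| ^ (2*γ - 2)) (Set.Ioi (1/2)) volume ∧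
     ∫ r in Set.Ioi ((1:ℝ)/2), r ^ (-2 : ℝ) * |1 - r| ^ (2*γ - 2) <
       ∫ r in Set.Ioi ((1:ℝ)/2), |r - r^2| ^ (2*γ - 2)) := by
  obtain ⟨hγ1, hγ2⟩ := hγ
  have hf := (integrableOn_rpow_mul_abs_one_sub_rpow (p := 2 - 2*γ) (q := 2*γ - 2)
    (by linarith) (by linarith) 2).mono_set Ioo_subset_Icc_self
  have hg := (integrableOn_rpow_mul_abs_one_sub_rpow (p := 2 - 4*γ) (q := 2*γ - 2)
    (by linarith) (by linarith) 2).mono_set Ioo_subset_Icc_self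
  have hlt := integral_rpow_two_sub_two_mul_lt_integral_rpow_two_sub_four_mul hγ1 hγ2
  have hf_inv :
      EqOn (fun x : ℝ => (x ^ 2)⁻¹ * ((x⁻¹) ^ (-2 : ℝ) * |1 - x⁻¹| ^ (2*γ - 2)))
      (fun r => r ^ (2 - 2*γ) * |1 - r| ^ (2*γ - 2)) (Ioo 0 2) := fun x hx => by
    simp only [inv_sq_mul_inv_rpow_neg_two_mul_abs_one_sub_inv_rpow hx.1, neg_sub]
  have hg_inv : EqOn (fun x : ℝ => (x ^ 2)⁻¹ * |x⁻¹ - (x⁻¹) ^ 2| ^ (2*γ - 2))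
      (fun r => r ^ (2 - 4*γ) * |1 - r| ^ (2*γ - 2)) (Ioo 0 2) := fun x hx => by
    simp only [inv_sq_mul_abs_inv_sub_inv_sq_rpow hx.1]
    ring_nf
  simp only [one_div, integrableOn_Ioi_inv_iff two_pos, setIntegral_Ioi_inv_eq two_pos,
    setIntegral_congr_fun measurableSet_Ioo hf_inv, setIntegral_congr_fun measurableSet_Ioo hg_inv]
  exact ⟨⟨hf, hg, hlt⟩, hf.congr_fun hf_inv.symm measurableSet_Ioo,
    hg.congr_fun hg_inv.symm measurableSet_Ioo, hlt⟩
end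

section
/- Let ξ, η ∈ ℝ² satisfy 4 ≤ |ξ| ≤ 7, 4 ≤ |η| ≤ 5, and 6 ≤ |ξ−η| ≤ 7. Then |sin(θ(ξ,η) − θ(ξ,ξ−η))| ≥ √210/490 > 1/40, where θ(u,w) ∈ [0,π] is the Euclidean angle between nonzero vectors u, w ∈ ℝ². -/
/-!
Put `a = ‖η‖`, `b = ‖ξ - η‖`, `c = ‖ξ‖`, `α = θ(ξ, η)`, `β = θ(ξ, ξ - η)` and
`G = c²a² - ⟪ξ, η⟫²`, so that `√G` is twice the area of the triangle `0, η, ξ`.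
Expanding `sin (α - β)` with `sin α · ca = sin β · cb = √G` gives
`sin (α - β) · c²ab = √G · (b² - a²)`, and Heron's formula
`4G = (a+b+c)(b+c-a)(c+a-b)(a+b-c)` bounds `G` below by `210/4`. Together with
`b² - a² ≥ 11` and `c²ab ≤ 1715` this gives `|sin (α - β)| ≥ 11√210/3430 ≥ √210/490`.
-/

namespace InnerProductGeometry

open scoped RealInnerProductSpace

variable {V : Type*} [NormedAddCommGroup V] [InnerProductSpace ℝ V]

theorem four_mul_gram_eq_heron (x y : V) :
    4 * (‖x‖ ^ 2 * ‖y‖ ^ 2 - ⟪x, y⟫ ^ 2) =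
      (‖y‖ + ‖x - y‖ + ‖x‖) * (‖x - y‖ + ‖x‖ - ‖y‖) * (‖x‖ + ‖y‖ - ‖x - y‖) *
        (‖y‖ + ‖x - y‖ - ‖x‖) := by
  have h := norm_sub_sq_real x y
  linear_combination (‖x - y‖ ^ 2 - 2 * ⟪x, y⟫ - ‖y‖ ^ 2 - ‖x‖ ^ 2) * h

theorem sin_angle_self_sub_mul_norm_mul_norm (x y : V) :
    Real.sin (angle x (x - y)) * (‖x‖ * ‖x - y‖) = √(‖x‖ ^ 2 * ‖y‖ ^ 2 - ⟪x, y⟫ ^ 2) := by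
  rw [sin_angle_mul_norm_mul_norm, real_inner_self_eq_norm_sq, real_inner_self_eq_norm_sq,
    inner_sub_right, real_inner_self_eq_norm_sq, norm_sub_sq_real]
  ring_nf

theorem sin_angle_sub_angle_self_sub_mul (x y : V) :
    Real.sin (angle x y - angle x (x - y)) * (‖x‖ ^ 2 * ‖y‖ * ‖x - y‖) =
      √(‖x‖ ^ 2 * ‖y‖ ^ 2 - ⟪x, y⟫ ^ 2) * (‖x - y‖ ^ 2 - ‖y‖ ^ 2) := by
  have hsin := sin_angle_mul_norm_mul_norm x y
  have hsin' := sin_angle_self_sub_mul_norm_mul_norm x y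
  have hcos := cos_angle_mul_norm_mul_norm x y
  have hcos' := cos_angle_mul_norm_mul_norm x (x - y)
  rw [real_inner_self_eq_norm_sq, real_inner_self_eq_norm_sq, ← sq] at hsin
  rw [inner_sub_right, real_inner_self_eq_norm_sq] at hcos'
  rw [Real.sin_sub, norm_sub_sq_real x y]
  linear_combination Real.cos (angle x (x - y)) * (‖x‖ * ‖x - y‖) * hsin +
    √(‖x‖ ^ 2 * ‖y‖ ^ 2 - ⟪x, y⟫ ^ 2) * hcos' -
    Real.sin (angle x (x - y)) * (‖x‖ * ‖x - y‖) * hcos - ⟪x, y⟫ * hsin'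

end InnerProductGeometry

theorem stmt17 (ξ η : EuclideanSpace ℝ (Fin 2))
    (hξ₁ : 4 ≤ ‖ξ‖) (hξ₂ : ‖ξ‖ ≤ 7)
    (hη₁ : 4 ≤ ‖η‖) (hη₂ : ‖η‖ ≤ 5)
    (hζ₁ : 6 ≤ ‖ξ - η‖) (hζ₂ : ‖ξ - η‖ ≤ 7) :
    Real.sqrt 210 / 490 ≤
      |Real.sin (InnerProductGeometry.angle ξ η - InnerProductGeometry.angle ξ (ξ - η))| ∧
    (1:ℝ)/40 < Real.sqrt 210 / 490 := by
  set a := ‖η‖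
  set b := ‖ξ - η‖
  set c := ‖ξ‖
  set G := c ^ 2 * a ^ 2 - inner ℝ ξ η ^ 2
  have hG : 210 ≤ 4 * G := by
    have h₁ : 14 * 5 ≤ (a + b + c) * (b + c - a) :=
      mul_le_mul (by linarith) (by linarith) (by norm_num) (by linarith)
    have h₂ : 14 * 5 * 1 ≤ (a + b + c) * (b + c - a) * (c + a - b) :=
      mul_le_mul h₁ (by linarith) (by norm_num) (by linarith)
    have h₃ : 14 * 5 * 1 * 3 ≤ (a + b + c) * (b + c - a) * (c + a - b) * (a + b - c) :=
      mul_le_mul h₂ (by linarith) (by norm_num) (by linarith)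
    rw [InnerProductGeometry.four_mul_gram_eq_heron]
    linarith
  have hsqrtG : √210 ≤ 2 * √G := by
    nlinarith [Real.sq_sqrt (show (0 : ℝ) ≤ 210 by norm_num), Real.sq_sqrt (show 0 ≤ G by linarith),
      Real.sqrt_nonneg 210, Real.sqrt_nonneg G]
  have hdiff : 11 ≤ b ^ 2 - a ^ 2 := by nlinarith
  have hden : c ^ 2 * a * b ≤ 7 ^ 2 * 5 * 7 := by gcongr
  have hden_pos : 0 < c ^ 2 * a * b := by positivity
  have hsin : |Real.sin (InnerProductGeometry.angle ξ η - InnerProductGeometry.angle ξ (ξ - η))| *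
      (c ^ 2 * a * b) = √G * (b ^ 2 - a ^ 2) := by
    rw [← abs_of_pos hden_pos, ← abs_mul, InnerProductGeometry.sin_angle_sub_angle_self_sub_mul,
      abs_of_nonneg (mul_nonneg (Real.sqrt_nonneg G) (by linarith))]
  refine ⟨?_, ?_⟩
  · calc √210 / 490 ≤ √210 / 2 * 11 / (7 ^ 2 * 5 * 7) := by linarith [Real.sqrt_nonneg 210]
      _ ≤ √G * (b ^ 2 - a ^ 2) / (c ^ 2 * a * b) := by
        gcongr
        · linarith
      _ = |Real.sin (InnerProductGeometry.angle ξ η - InnerProductGeometry.angle ξ (ξ - η))| := by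
        rw [← hsin, mul_div_cancel_right₀ _ hden_pos.ne']
  · rw [lt_div_iff₀ (by norm_num), Real.lt_sqrt (by norm_num)]
    norm_num
end

section
/- Let γ ∈ (1/2,1) and c₀ = 1/(2π). Let u₀-hat : ℝ² \ {0} → ℂ² be measurable with ξ·û₀(ξ) = 0 (bilinear dot product) for all ξ ≠ 0, suppose the scalar function ξ ↦ û₀(ξ)·e_{ξ⊥} depends only on |ξ|, and suppose ∫_{ℝ²} |û₀(η)| |û₀(ξ−η)| dη < ∞ for every ξ ≠ 0. Then the function v(ξ,t) = û₀(ξ) e^{−|ξ|^{2γ}t} satisfies, for all ξ ≠ 0 and t ≥ 0, the mild two-dimensional fractional Navier–Stokes equation in Fourier variables: v(ξ,t) = û₀(ξ) e^{−|ξ|^{2γ}t} + c₀ ∫_0^t |ξ| e^{−|ξ|^{2γ}s} ∫_{ℝ²} v(η,t−s) ⊙_ξ v(ξ−η,t−s) dη ds; that is, the nonlinear term vanishes identically, and vortex initial data evolve by pure fractional heat flow for all time. -/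
open MeasureTheory Set

noncomputable instance : MeasurableSpace (EuclideanSpace ℂ (Fin 2)) := borel _
instance : BorelSpace (EuclideanSpace ℂ (Fin 2)) := ⟨rfl⟩

/-!
Reflection `R` across the line `ℝξ` preserves Lebesgue measure, fixes `ξ`, and acts as `-1` on
`ξ⊥`; hence `e_ξ · R a = e_ξ · a` and `π_{ξ⊥}(R a) = -π_{ξ⊥} a`, so `R a ⊙_ξ R b = -(a ⊙_ξ b)`.
A divergence-free radial field has the form `φ(|η|) e_{η⊥}`, and since `e_{(Rη)⊥} = -R e_{η⊥}`
the integrand `η ↦ v(η) ⊙_ξ v(ξ - η)` is odd under `η ↦ Rη`, so its integral vanishes. The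
heat-flow factors `e^{-|η|^{2γ}τ}` are radial, so `v(·, τ)` stays a vortex for every `τ`.
-/

theorem MeasureTheory.integral_eq_zero_of_comp_eq_neg {E A : Type*} [NormedAddCommGroup E]
    [InnerProductSpace ℝ E] [FiniteDimensional ℝ E] [MeasurableSpace E] [BorelSpace E]
    [NormedAddCommGroup A] [NormedSpace ℝ A] (R : E ≃ₗᵢ[ℝ] E) {g : E → A}
    (hg : ∀ x, g (R x) = -g x) : ∫ x, g x = 0 := by
  have h : ∫ x, g x = -∫ x, g x :=
    calc ∫ x, g x = ∫ x, g (R x) := (integral_comp R g).symm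
      _ = -∫ x, g x := by simp only [hg, integral_neg]
  have h2 : (2 : ℝ) • ∫ x, g x = 0 := by
    rw [two_smul]; nth_rw 2 [h]; exact add_neg_cancel _
  exact (smul_eq_zero.mp h2).resolve_left two_ne_zero

namespace Vortex

open Submodule

local notation "E" => EuclideanSpace ℝ (Fin 2)
local notation "F" => EuclideanSpace ℂ (Fin 2)

lemma complexify_apply (x : E) (j : Fin 2) : complexify x j = (x j : ℂ) := rfl

lemma perp_apply_zero (x : E) : perp x 0 = -(x 1) := rfl

lemma perp_apply_one (x : E) : perp x 1 = x 0 := rfl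

lemma complexify_smul (r : ℝ) (x : E) : complexify (r • x) = (r : ℂ) • complexify x := by
  ext j; simp [complexify_apply]

lemma complexify_sub (x y : E) : complexify (x - y) = complexify x - complexify y := by
  ext j; simp [complexify_apply]

lemma complexify_neg (x : E) : complexify (-x) = -complexify x := by
  ext j; simp [complexify_apply]

lemma dotC_complexify (x y : E) :
    dotC (complexify x) (complexify y) = ((inner ℝ x y : ℝ) : ℂ) := by
  simp [dotC, complexify_apply, PiLp.inner_apply, Fin.sum_univ_two, mul_comm]

lemma dotC_smul_right (c : ℂ) (a b : F) : dotC a (c • b) = c * dotC a b := by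
  simp only [dotC, PiLp.smul_apply, smul_eq_mul, Finset.mul_sum]
  exact Finset.sum_congr rfl fun _ _ => by ring

lemma norm_sq_eq (x : E) : ‖x‖ ^ 2 = x 0 ^ 2 + x 1 ^ 2 := by
  simp [EuclideanSpace.norm_sq_eq, Fin.sum_univ_two]

lemma norm_perp (x : E) : ‖perp x‖ = ‖x‖ := by
  rw [← sq_eq_sq₀ (norm_nonneg _) (norm_nonneg _), norm_sq_eq, norm_sq_eq, perp_apply_zero,
    perp_apply_one]
  ring

lemma projPerp_smul (ξ : E) (c : ℂ) (a : F) : projPerp ξ (c • a) = c • projPerp ξ a := by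
  simp only [projPerp, dotC_smul_right, smul_sub, mul_smul]

lemma odot_smul_smul (ξ : E) (c d : ℂ) (a b : F) :
    odot ξ (c • a) (d • b) = (c * d) • odot ξ a b := by
  simp only [odot, dotC_smul_right, projPerp_smul, smul_add, smul_smul]
  ring_nf

lemma odot_neg_neg (ξ : E) (a b : F) : odot ξ (-a) (-b) = odot ξ a b := by
  simpa using odot_smul_smul ξ (-1) (-1) a b

lemma eq_smul_unitPerp_of_dotC_eq_zero {v : E} (hv : v ≠ 0) {a : F}
    (ha : dotC (complexify v) a = 0) :
    a = dotC a (complexify (unitPerp v)) • complexify (unitPerp v) := by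
  have hn : ((‖v‖ : ℝ) : ℂ) ≠ 0 := by exact_mod_cast norm_ne_zero_iff.2 hv
  have hsq : ((‖v‖ : ℝ) : ℂ) ^ 2 = (v 0 : ℂ) ^ 2 + (v 1 : ℂ) ^ 2 := by
    exact_mod_cast norm_sq_eq v
  have hd : (v 0 : ℂ) * a 0 + (v 1 : ℂ) * a 1 = 0 := by
    simpa [dotC, complexify_apply, Fin.sum_univ_two] using ha
  ext j
  fin_cases j
  all_goals
    simp only [Fin.zero_eta, Fin.mk_one, Fin.isValue, dotC, Fin.sum_univ_two, complexify_apply,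
      unitPerp, norm_perp, PiLp.smul_apply, smul_eq_mul, perp_apply_zero, perp_apply_one]
    push_cast
    field_simp
  · linear_combination a 0 * hsq + (v 0 : ℂ) * hd
  · linear_combination a 1 * hsq + (v 1 : ℂ) * hd

lemma inner_eq_coords (x y : E) : inner ℝ x y = x 0 * y 0 + x 1 * y 1 := by
  simp [PiLp.inner_apply, Fin.sum_univ_two, mul_comm]

section Reflection

variable (ξ : E)

lemma reflection_singleton_apply_coord (v : E) (j : Fin 2) :
    reflection (ℝ ∙ ξ) v j = 2 * (inner ℝ ξ v / ‖ξ‖ ^ 2) * ξ j - v j := by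
  simp [reflection_singleton_apply, mul_assoc]

lemma reflection_singleton_self : reflection (ℝ ∙ ξ) ξ = ξ :=
  reflection_mem_subspace_eq_self (mem_span_singleton_self ξ)

lemma inner_reflection_singleton_right (v : E) :
    inner ℝ ξ (reflection (ℝ ∙ ξ) v) = inner ℝ ξ v := by
  simpa only [reflection_singleton_self] using (reflection (ℝ ∙ ξ)).inner_map_map ξ v

lemma perp_reflection {ξ : E} (hξ : ξ ≠ 0) (v : E) :
    perp (reflection (ℝ ∙ ξ) v) = -reflection (ℝ ∙ ξ) (perp v) := by
  have hn : ‖ξ‖ ≠ 0 := norm_ne_zero_iff.2 hξ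
  ext j
  fin_cases j
  all_goals
    simp only [Fin.zero_eta, Fin.mk_one, Fin.isValue, PiLp.neg_apply, perp_apply_zero,
      perp_apply_one, reflection_singleton_apply_coord, inner_eq_coords]
    field_simp
    rw [norm_sq_eq]
    ring

lemma unitPerp_reflection {ξ : E} (hξ : ξ ≠ 0) (v : E) :
    unitPerp (reflection (ℝ ∙ ξ) v) = -reflection (ℝ ∙ ξ) (unitPerp v) := by
  rw [unitPerp, perp_reflection hξ, norm_neg, LinearIsometryEquiv.norm_map, unitPerp,
    LinearIsometryEquiv.map_smul, smul_neg]

lemma dotC_eC_complexify_reflection (v : E) :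
    dotC (eC ξ) (complexify (reflection (ℝ ∙ ξ) v)) = dotC (eC ξ) (complexify v) := by
  rw [eC, dotC_complexify, dotC_complexify, real_inner_smul_left, real_inner_smul_left,
    inner_reflection_singleton_right]

lemma projPerp_complexify (w : E) :
    projPerp ξ (complexify w) = complexify (w - (inner ℝ ξ w / ‖ξ‖ ^ 2) • ξ) := by
  rw [complexify_sub, projPerp, eC, dotC_complexify, complexify_smul, complexify_smul,
    smul_smul, real_inner_smul_left]
  congr 2
  push_cast
  ring

lemma projPerp_complexify_reflection (v : E) :
    projPerp ξ (complexify (reflection (ℝ ∙ ξ) v)) = -projPerp ξ (complexify v) := by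
  rw [projPerp_complexify, projPerp_complexify, inner_reflection_singleton_right,
    ← complexify_neg]
  congr 1
  ext j
  simp only [PiLp.sub_apply, PiLp.neg_apply, PiLp.smul_apply, smul_eq_mul,
    reflection_singleton_apply_coord]
  ring

lemma odot_complexify_reflection (a b : E) :
    odot ξ (complexify (reflection (ℝ ∙ ξ) a)) (complexify (reflection (ℝ ∙ ξ) b)) =
      -odot ξ (complexify a) (complexify b) := by
  simp only [odot, dotC_eC_complexify_reflection, projPerp_complexify_reflection, smul_neg,
    ← neg_add]

end Reflection

/-- A vortex: a divergence-free field whose stream function is radial. -/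
noncomputable def vortexField (φ : ℝ → ℂ) (η : E) : F :=
  φ ‖η‖ • complexify (unitPerp η)

lemma real_smul_vortexField (f : ℝ → ℝ) (φ : ℝ → ℂ) (η : E) :
    f ‖η‖ • vortexField φ η = vortexField (fun r => (f r : ℂ) * φ r) η := by
  rw [vortexField, vortexField, ← smul_assoc, Complex.real_smul]

lemma exists_eq_vortexField (u0 : E → F)
    (hdiv : ∀ ξ : E, ξ ≠ 0 → dotC (complexify ξ) (u0 ξ) = 0)
    (hrad : ∀ ξ ζ : E, ξ ≠ 0 → ζ ≠ 0 → ‖ξ‖ = ‖ζ‖ →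
      dotC (u0 ξ) (complexify (unitPerp ξ)) = dotC (u0 ζ) (complexify (unitPerp ζ))) :
    ∃ φ : ℝ → ℂ, ∀ η : E, η ≠ 0 → u0 η = vortexField φ η := by
  let ray : ℝ → E := fun r => r • EuclideanSpace.single 0 1
  refine ⟨fun r => dotC (u0 (ray r)) (complexify (unitPerp (ray r))), fun η hη => ?_⟩
  have hnorm : ‖ray ‖η‖‖ = ‖η‖ := by simp [ray, norm_smul]
  have hray : ray ‖η‖ ≠ 0 := by
    rw [← norm_ne_zero_iff, hnorm, norm_ne_zero_iff]; exact hη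
  rw [vortexField, ← hrad η _ hη hray hnorm.symm]
  exact eq_smul_unitPerp_of_dotC_eq_zero hη (hdiv η hη)

lemma odot_vortexField_comp_reflection {ξ : E} (hξ : ξ ≠ 0) (φ ψ : ℝ → ℂ) (η : E) :
    odot ξ (vortexField φ (reflection (ℝ ∙ ξ) η)) (vortexField ψ (ξ - reflection (ℝ ∙ ξ) η)) =
      -odot ξ (vortexField φ η) (vortexField ψ (ξ - η)) := by
  have hsub : ξ - reflection (ℝ ∙ ξ) η = reflection (ℝ ∙ ξ) (ξ - η) := by
    rw [map_sub, reflection_singleton_self]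
  simp only [vortexField, hsub, LinearIsometryEquiv.norm_map, unitPerp_reflection hξ,
    complexify_neg, odot_smul_smul, odot_neg_neg, odot_complexify_reflection, smul_neg]

lemma integral_odot_vortexField_eq_zero {ξ : E} (hξ : ξ ≠ 0) (φ ψ : ℝ → ℂ) :
    ∫ η, odot ξ (vortexField φ η) (vortexField ψ (ξ - η)) = 0 :=
  integral_eq_zero_of_comp_eq_neg (reflection (ℝ ∙ ξ)) (odot_vortexField_comp_reflection hξ φ ψ)

lemma integral_odot_vortex_eq_zero (u0 : E → F)
    (hdiv : ∀ ξ : E, ξ ≠ 0 → dotC (complexify ξ) (u0 ξ) = 0)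
    (hrad : ∀ ξ ζ : E, ξ ≠ 0 → ζ ≠ 0 → ‖ξ‖ = ‖ζ‖ →
      dotC (u0 ξ) (complexify (unitPerp ξ)) = dotC (u0 ζ) (complexify (unitPerp ζ)))
    {ξ : E} (hξ : ξ ≠ 0) (f g : ℝ → ℝ) :
    ∫ η, odot ξ (f ‖η‖ • u0 η) (g ‖ξ - η‖ • u0 (ξ - η)) = 0 := by
  obtain ⟨φ, hφ⟩ := exists_eq_vortexField u0 hdiv hrad
  have hnull : (volume : Measure E) {0, ξ} = 0 := ((finite_singleton ξ).insert 0).measure_zero _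
  have hae : (fun η => odot ξ (f ‖η‖ • u0 η) (g ‖ξ - η‖ • u0 (ξ - η))) =ᵐ[volume]
      fun η => odot ξ (vortexField (fun r => (f r : ℂ) * φ r) η)
        (vortexField (fun r => (g r : ℂ) * φ r) (ξ - η)) := by
    filter_upwards [compl_mem_ae_iff.2 hnull] with η hη
    simp only [mem_compl_iff, mem_insert_iff, mem_singleton_iff, not_or] at hη
    rw [hφ η hη.1, hφ (ξ - η) (sub_ne_zero.2 (Ne.symm hη.2)), real_smul_vortexField,
      real_smul_vortexField]
  rw [integral_congr_ae hae, integral_odot_vortexField_eq_zero hξ]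

end Vortex

theorem stmt19_general (γ : ℝ)
    (u0 : EuclideanSpace ℝ (Fin 2) → EuclideanSpace ℂ (Fin 2))
    (hdiv : ∀ ξ : EuclideanSpace ℝ (Fin 2), ξ ≠ 0 → dotC (complexify ξ) (u0 ξ) = 0)
    (hrad : ∀ ξ ζ : EuclideanSpace ℝ (Fin 2), ξ ≠ 0 → ζ ≠ 0 → ‖ξ‖ = ‖ζ‖ →
      dotC (u0 ξ) (complexify (unitPerp ξ)) = dotC (u0 ζ) (complexify (unitPerp ζ))) :
    ∀ ξ : EuclideanSpace ℝ (Fin 2), ξ ≠ 0 → ∀ t : ℝ, 0 ≤ t →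
      Real.exp (-(‖ξ‖ ^ (2*γ)) * t) • u0 ξ =
        Real.exp (-(‖ξ‖ ^ (2*γ)) * t) • u0 ξ +
          (1/(2*Real.pi)) • ∫ s in (0:ℝ)..t, (‖ξ‖ * Real.exp (-(‖ξ‖ ^ (2*γ)) * s)) •
            ∫ η : EuclideanSpace ℝ (Fin 2),
              odot ξ (Real.exp (-(‖η‖ ^ (2*γ)) * (t - s)) • u0 η)
                (Real.exp (-(‖ξ - η‖ ^ (2*γ)) * (t - s)) • u0 (ξ - η)) := by
  intro ξ hξ t _
  have hnonlinear : ∀ s : ℝ,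
      ∫ η : EuclideanSpace ℝ (Fin 2),
        odot ξ (Real.exp (-(‖η‖ ^ (2*γ)) * (t - s)) • u0 η)
          (Real.exp (-(‖ξ - η‖ ^ (2*γ)) * (t - s)) • u0 (ξ - η)) = 0 := fun s =>
    Vortex.integral_odot_vortex_eq_zero u0 hdiv hrad hξ
      (fun r => Real.exp (-(r ^ (2*γ)) * (t - s))) (fun r => Real.exp (-(r ^ (2*γ)) * (t - s)))
  simp only [hnonlinear, smul_zero, intervalIntegral.integral_zero, add_zero]

theorem stmt19 (γ : ℝ) (hγ : γ ∈ Set.Ioo (1/2 : ℝ) 1)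
    (u0 : EuclideanSpace ℝ (Fin 2) → EuclideanSpace ℂ (Fin 2))
    (hmeas : Measurable u0)
    (hdiv : ∀ ξ : EuclideanSpace ℝ (Fin 2), ξ ≠ 0 → dotC (complexify ξ) (u0 ξ) = 0)
    (hrad : ∀ ξ ζ : EuclideanSpace ℝ (Fin 2), ξ ≠ 0 → ζ ≠ 0 → ‖ξ‖ = ‖ζ‖ →
      dotC (u0 ξ) (complexify (unitPerp ξ)) = dotC (u0 ζ) (complexify (unitPerp ζ)))
    (hint : ∀ ξ : EuclideanSpace ℝ (Fin 2), ξ ≠ 0 →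
      Integrable (fun η => ‖u0 η‖ * ‖u0 (ξ - η)‖)
        (volume : Measure (EuclideanSpace ℝ (Fin 2)))) :
    ∀ ξ : EuclideanSpace ℝ (Fin 2), ξ ≠ 0 → ∀ t : ℝ, 0 ≤ t →
      Real.exp (-(‖ξ‖ ^ (2*γ)) * t) • u0 ξ =
        Real.exp (-(‖ξ‖ ^ (2*γ)) * t) • u0 ξ +
          (1/(2*Real.pi)) • ∫ s in (0:ℝ)..t, (‖ξ‖ * Real.exp (-(‖ξ‖ ^ (2*γ)) * s)) •
            ∫ η : EuclideanSpace ℝ (Fin 2),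
              odot ξ (Real.exp (-(‖η‖ ^ (2*γ)) * (t - s)) • u0 η)
                (Real.exp (-(‖ξ - η‖ ^ (2*γ)) * (t - s)) • u0 (ξ - η)) :=
  stmt19_general γ u0 hdiv hrad
end
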